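/- For α ∈ [0,π], in the weak coin flipping protocol, any cheating strategy of Bob (given by a unitary U: |i⟩|0̄⟩|0⟩ ↦ |φ_{i,0}⟩|0⟩ + |φ_{i,1}⟩|1⟩ followed by measurement of the last qubit) wins with probability at most ((1/√2)cos²(α/2) + sin²(α/2))². -/

import Mathlib

open scoped InnerProductSpace

/-- `|ψ_{a,s}⟩ = cos(α/2)|0⟩ + (−1)^s sin(α/2)|a+1⟩` in `ℂ³`. -/
noncomputable def psit (α : ℝ) (a s : Fin 2) : Fin 3 → ℂ :=
  (Real.cos (α / 2) : ℂ) • (Pi.single 0 1 : Fin 3 → ℂ) +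
    ((-1 : ℂ) ^ (s : ℕ) * (Real.sin (α / 2) : ℂ)) • (Pi.single a.succ 1 : Fin 3 → ℂ)

/-- `|ψ_a⟩ = (1/√2)(|0⟩|ψ_{a,0}⟩ + |1⟩|ψ_{a,1}⟩)` in `ℂ² ⊗ ℂ³`. -/
noncomputable def psi (α : ℝ) (a : Fin 2) : Fin 2 × Fin 3 → ℂ :=
  fun p => (Real.sqrt 2 : ℂ)⁻¹ * psit α a p.1 p.2

/-- `|ψ_a⟩` as a vector of the inner-product space `ℂ² ⊗ ℂ³ ≅ ℂ⁶`. -/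
noncomputable def psiE (α : ℝ) (a : Fin 2) : EuclideanSpace ℂ (Fin 2 × Fin 3) :=
  (WithLp.equiv 2 ((Fin 2 × Fin 3) → ℂ)).symm (psi α a)

/-- The partial inner product `⟨u|v⟩ ∈ H` of `u ∈ ℂ²⊗ℂ³` with `v ∈ (ℂ²⊗ℂ³)⊗H`
(the projection of `v` under `|u⟩⟨u| ⊗ I`, viewed in `H`). -/
noncomputable def pInner {m : Type*} [Fintype m] (u : EuclideanSpace ℂ (Fin 2 × Fin 3))
    (v : EuclideanSpace ℂ ((Fin 2 × Fin 3) × m)) : EuclideanSpace ℂ m :=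
  (WithLp.equiv 2 (m → ℂ)).symm fun k =>
    ∑ p : Fin 2 × Fin 3, (starRingEnd ℂ) (u p) * v (p, k)

/-!
Summing over Bob's two outcomes `t`, the cross terms of `⟨ψ_a|v_a⟩` cancel, leaving
`cos²(α/2) φ_{0,1-a}(0,·) + sin²(α/2) φ_{a+1,1-a}(a+1,·)`. Slices are no longer than the vectors
they come from and `‖φ_{a+1,1-a}‖ ≤ 1`, so `‖⟨ψ_a|v_a⟩‖ ≤ cos²(α/2) x_a + sin²(α/2)` with
`x_0 = ‖φ_{0,1}‖`, `x_1 = ‖φ_{0,0}‖`. Averaging the squares, `x_0² + x_1² = 1` and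
`x_0 + x_1 ≤ √2` give exactly `((1/√2) cos²(α/2) + sin²(α/2))²`.
-/

namespace EuclideanSpace

variable {𝕜 : Type*} [RCLike 𝕜] {n m : Type*} [Fintype n] [Fintype m]

def slice (u : EuclideanSpace 𝕜 (n × m)) (i : n) : EuclideanSpace 𝕜 m :=
  WithLp.toLp 2 fun k => u (i, k)

lemma norm_slice_le (u : EuclideanSpace 𝕜 (n × m)) (i : n) : ‖u.slice i‖ ≤ ‖u‖ := by
  refine (pow_le_pow_iff_left₀ (norm_nonneg _) (norm_nonneg _) two_ne_zero).1 ?_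
  rw [norm_sq_eq, norm_sq_eq, Fintype.sum_prod_type]
  exact Finset.single_le_sum (f := fun j => ∑ k, ‖u (j, k)‖ ^ 2)
    (fun j _ => by positivity) (Finset.mem_univ i)

end EuclideanSpace

lemma add_le_sqrt_two_of_sq_add_sq_eq_one {x y : ℝ} (h : x ^ 2 + y ^ 2 = 1) : x + y ≤ √2 :=
  (le_abs_self _).trans <| Real.abs_le_sqrt <| by nlinarith [sq_nonneg (x - y)]

lemma half_sq_add_sq_le {C S x y : ℝ} (hC : 0 ≤ C) (hS : 0 ≤ S) (h : x ^ 2 + y ^ 2 = 1) :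
    1 / 2 * ((C * x + S) ^ 2 + (C * y + S) ^ 2) ≤ ((√2)⁻¹ * C + S) ^ 2 := by
  have hsqrt : (√2 : ℝ) ^ 2 = 2 := Real.sq_sqrt zero_le_two
  have hsum := add_le_sqrt_two_of_sq_add_sq_eq_one h
  calc 1 / 2 * ((C * x + S) ^ 2 + (C * y + S) ^ 2)
      = C ^ 2 / 2 + C * S * (x + y) + S ^ 2 := by linear_combination C ^ 2 / 2 * h
    _ ≤ C ^ 2 / 2 + C * S * √2 + S ^ 2 := by gcongr
    _ = ((√2)⁻¹ * C + S) ^ 2 := by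
      field_simp
      linear_combination (C ^ 2 + 2 * √2 * C * S) * hsqrt

lemma norm_le_one_of_sq_add_sq_eq_one {E : Type*} [SeminormedAddGroup E] {x y : E}
    (h : ‖x‖ ^ 2 + ‖y‖ ^ 2 = 1) : ‖x‖ ≤ 1 := by
  nlinarith [norm_nonneg x, sq_nonneg ‖y‖]

lemma pInner_psiE_eq (α : ℝ) {m : Type*} [Fintype m] {φ₀ φ₁ : EuclideanSpace ℂ (Fin 3 × m)}
    {w : EuclideanSpace ℂ ((Fin 2 × Fin 3) × m)}
    (hw : ∀ (t : Fin 2) (j : Fin 3) (k : m), w ((t, j), k) = (Real.sqrt 2 : ℂ)⁻¹ *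
      ((Real.cos (α / 2) : ℂ) * φ₀ (j, k) + (-1 : ℂ) ^ (t : ℕ) * (Real.sin (α / 2) : ℂ) * φ₁ (j, k)))
    (a : Fin 2) :
    pInner (psiE α a) w =
      (Real.cos (α / 2) ^ 2) • φ₀.slice 0 + (Real.sin (α / 2) ^ 2) • φ₁.slice a.succ := by
  have h2 : ((Real.sqrt 2 : ℂ))⁻¹ ^ 2 = 2⁻¹ := by
    rw [inv_pow, ← Complex.ofReal_pow, Real.sq_sqrt zero_le_two, Complex.ofReal_ofNat]
  ext k
  fin_cases a <;>
  · simp [pInner, psiE, psi, psit, EuclideanSpace.slice, hw, Fintype.sum_prod_type,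
      Fin.sum_univ_three, Pi.single_apply, -Complex.ofReal_cos, -Complex.ofReal_sin]
    ring_nf
    rw [h2]
    ring

lemma norm_pInner_psiE_le (α : ℝ) {m : Type*} [Fintype m] {φ₀ φ₁ : EuclideanSpace ℂ (Fin 3 × m)}
    {w : EuclideanSpace ℂ ((Fin 2 × Fin 3) × m)}
    (hw : ∀ (t : Fin 2) (j : Fin 3) (k : m), w ((t, j), k) = (Real.sqrt 2 : ℂ)⁻¹ *
      ((Real.cos (α / 2) : ℂ) * φ₀ (j, k) + (-1 : ℂ) ^ (t : ℕ) * (Real.sin (α / 2) : ℂ) * φ₁ (j, k)))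
    (a : Fin 2) :
    ‖pInner (psiE α a) w‖ ≤ Real.cos (α / 2) ^ 2 * ‖φ₀‖ + Real.sin (α / 2) ^ 2 * ‖φ₁‖ := by
  rw [pInner_psiE_eq α hw a]
  refine (norm_add_le _ _).trans ?_
  rw [norm_smul, norm_smul, Real.norm_of_nonneg (sq_nonneg _), Real.norm_of_nonneg (sq_nonneg _)]
  gcongr <;> exact EuclideanSpace.norm_slice_le _ _

theorem bob_cheating_bound (α : ℝ)
    {m : Type*} [Fintype m]
    (φ : Fin 3 → Fin 2 → EuclideanSpace ℂ (Fin 3 × m))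
    (hφ : ∀ i : Fin 3, ‖φ i 0‖ ^ 2 + ‖φ i 1‖ ^ 2 = 1)
    (v : Fin 2 → EuclideanSpace ℂ ((Fin 2 × Fin 3) × m))
    (hv : ∀ (a t : Fin 2) (j : Fin 3) (k : m),
      v a ((t, j), k) = (Real.sqrt 2 : ℂ)⁻¹ *
        ((Real.cos (α / 2) : ℂ) * φ 0 (a + 1) (j, k) +
          (-1 : ℂ) ^ (t : ℕ) * (Real.sin (α / 2) : ℂ) * φ a.succ (a + 1) (j, k))) :
    (1 / 2) * ∑ a : Fin 2, ‖pInner (psiE α a) (v a)‖ ^ 2 ≤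
      ((Real.sqrt 2)⁻¹ * Real.cos (α / 2) ^ 2 + Real.sin (α / 2) ^ 2) ^ 2 := by
  have hφ_le_one (i : Fin 3) (b : Fin 2) : ‖φ i b‖ ≤ 1 := by
    fin_cases b
    · exact norm_le_one_of_sq_add_sq_eq_one (hφ i)
    · exact norm_le_one_of_sq_add_sq_eq_one ((add_comm _ _).trans (hφ i))
  have hwin (a : Fin 2) :
      ‖pInner (psiE α a) (v a)‖ ≤ Real.cos (α / 2) ^ 2 * ‖φ 0 (a + 1)‖ + Real.sin (α / 2) ^ 2 := by
    refine (norm_pInner_psiE_le α (hv a) a).trans ?_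
    gcongr
    exact mul_le_of_le_one_right (sq_nonneg _) (hφ_le_one _ _)
  rw [Fin.sum_univ_two]
  calc 1 / 2 * (‖pInner (psiE α 0) (v 0)‖ ^ 2 + ‖pInner (psiE α 1) (v 1)‖ ^ 2)
      ≤ 1 / 2 * ((Real.cos (α / 2) ^ 2 * ‖φ 0 1‖ + Real.sin (α / 2) ^ 2) ^ 2 +
          (Real.cos (α / 2) ^ 2 * ‖φ 0 0‖ + Real.sin (α / 2) ^ 2) ^ 2) := by
        gcongr
        exacts [hwin 0, hwin 1]
    _ ≤ _ := half_sq_add_sq_le (sq_nonneg _) (sq_nonneg _) ((add_comm _ _).trans (hφ 0))
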